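/- arXiv:2412.08415 — 2 statements merged into one kernel-verified Lean document; each statement's English description precedes it below -/
import Mathlib

section
/- Let h ∈ 𝓗 and set c := inf_{(q,p)∈ℝ²×ℝ²} (h(q,p) − dh_{(q,p)}(0,p)), which is positive. Fix q₀,q₁ ∈ ℝ² and let (v,η) with v = (q,p) ∈ W^{1,2}([0,1], ℝ²×ℝ²), q(0) = q₀, q(1) = q₁, η ∈ ℝ. If ‖∇𝒜(v,η)‖ < 1 for the Rabinowitz action functional 𝒜 of H := H₀ − h, then |η| ≤ |𝒜(v,η)|/c + 1/√(2c). -/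
open Set MeasureTheory

abbrev R2 : Type := ℝ × ℝ
abbrev Phase : Type := R2 × R2

noncomputable section

def sq2 (a : R2) : ℝ := a.1 ^ 2 + a.2 ^ 2

/-- Euclidean norm on `ℝ²`. -/
def enorm2 (a : R2) : ℝ := Real.sqrt (sq2 a)

/-- Euclidean inner product on `ℝ²`. -/
def inner2 (a b : R2) : ℝ := a.1 * b.1 + a.2 * b.2

/-- The Copernican Hamiltonian `H₀(q,p) = (p₁² + p₂²)/2 + p₁q₂ − p₂q₁`. -/
def H0 (x : Phase) : ℝ :=
  (x.2.1 ^ 2 + x.2.2 ^ 2) / 2 + x.2.1 * x.1.2 - x.2.2 * x.1.1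

/-- The Hamiltonian vector field `X_H = (∂H/∂p₁, ∂H/∂p₂, −∂H/∂q₁, −∂H/∂q₂)`. -/
def XH (H : Phase → ℝ) (x : Phase) : Phase :=
  ((fderiv ℝ H x ((0, 0), (1, 0)), fderiv ℝ H x ((0, 0), (0, 1))),
   (-fderiv ℝ H x ((1, 0), (0, 0)), -fderiv ℝ H x ((0, 1), (0, 0))))

/-- `(v, v')` is a `W^{1,2}`-path from the fibre over `q0` to the fibre over `q1`:
`v` has derivative `v'` on `[0,1]` and `v' ∈ L²([0,1])`. -/
def IsPath (q0 q1 : R2) (v v' : ℝ → Phase) : Prop :=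
  (v 0).1 = q0 ∧ (v 1).1 = q1 ∧
  (∀ t ∈ Icc (0:ℝ) 1, HasDerivWithinAt v (v' t) (Icc (0:ℝ) 1) t) ∧
  IntervalIntegrable (fun t => sq2 (v' t).1 + sq2 (v' t).2) volume 0 1

/-- The Rabinowitz action functional `𝒜(v,η) = ∫₀¹⟨p,q'⟩ − η∫₀¹H(v)`. -/
def action (H : Phase → ℝ) (v v' : ℝ → Phase) (η : ℝ) : ℝ :=
  (∫ t in (0:ℝ)..1, inner2 (v t).2 (v' t).1) - η * ∫ t in (0:ℝ)..1, H (v t)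

/-- Square of the L²-gradient norm of the Rabinowitz action functional:
`∫₀¹|v' − η X_H(v)|² + (∫₀¹ H(v))²`. -/
def gradSq (H : Phase → ℝ) (v v' : ℝ → Phase) (η : ℝ) : ℝ :=
  (∫ t in (0:ℝ)..1,
      sq2 ((v' t).1 - η • (XH H (v t)).1) + sq2 ((v' t).2 - η • (XH H (v t)).2))
    + (∫ t in (0:ℝ)..1, H (v t)) ^ 2

/-- Euclidean norm `‖dh_x‖ = |∇h(x)|` of the differential of `h` at `x`. -/
def gnorm (h : Phase → ℝ) (x : Phase) : ℝ :=
  Real.sqrt ((fderiv ℝ h x ((1, 0), (0, 0))) ^ 2 + (fderiv ℝ h x ((0, 1), (0, 0))) ^ 2 +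
    (fderiv ℝ h x ((0, 0), (1, 0))) ^ 2 + (fderiv ℝ h x ((0, 0), (0, 1))) ^ 2)

/-- Membership in the set `B_h(𝔞,𝔶,ε)` of infinitesimally small action derivation:
`‖∇𝒜(v,η)‖ < ε`, `|𝒜(v,η)| ≤ 𝔞` and `|η| ≤ 𝔶`. -/
def memB (h : Phase → ℝ) (q0 q1 : R2) (A Y ε : ℝ) (v v' : ℝ → Phase) (η : ℝ) : Prop :=
  IsPath q0 q1 v v' ∧
  Real.sqrt (gradSq (fun x => H0 x - h x) v v' η) < ε ∧
  |action (fun x => H0 x - h x) v v' η| ≤ A ∧ |η| ≤ Y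

end

noncomputable section

lemma contDiff_H0 : ContDiff ℝ (⊤ : ℕ∞) H0 := by
  unfold H0
  fun_prop (disch := norm_num)

def p1c : Phase →L[ℝ] ℝ := (ContinuousLinearMap.fst ℝ ℝ ℝ).comp (ContinuousLinearMap.snd ℝ R2 R2)
def p2c : Phase →L[ℝ] ℝ := (ContinuousLinearMap.snd ℝ ℝ ℝ).comp (ContinuousLinearMap.snd ℝ R2 R2)
def q1c : Phase →L[ℝ] ℝ := (ContinuousLinearMap.fst ℝ ℝ ℝ).comp (ContinuousLinearMap.fst ℝ R2 R2)
def q2c : Phase →L[ℝ] ℝ := (ContinuousLinearMap.snd ℝ ℝ ℝ).comp (ContinuousLinearMap.fst ℝ R2 R2)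

lemma fderiv_H0_apply (x u : Phase) :
    fderiv ℝ H0 x u = x.2.1 * u.2.1 + x.2.2 * u.2.2 + (x.2.1 * u.1.2 + u.2.1 * x.1.2)
      - (x.2.2 * u.1.1 + u.2.2 * x.1.1) := by
  have h1 : HasFDerivAt (fun y : Phase => y.2.1) p1c x := p1c.hasFDerivAt
  have h2 : HasFDerivAt (fun y : Phase => y.2.2) p2c x := p2c.hasFDerivAt
  have h3 : HasFDerivAt (fun y : Phase => y.1.1) q1c x := q1c.hasFDerivAt
  have h4 : HasFDerivAt (fun y : Phase => y.1.2) q2c x := q2c.hasFDerivAt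
  have heq : H0 = fun y : Phase => (y.2.1 * y.2.1 + y.2.2 * y.2.2) * (1/2)
      + y.2.1 * y.1.2 - y.2.2 * y.1.1 := by
    funext y; unfold H0; ring
  have hb := ((((h1.mul h1).add (h2.mul h2)).mul_const (1/2)).add (h1.mul h4)).sub (h2.mul h3)
  rw [heq, (show HasFDerivAt (fun y : Phase => (y.2.1 * y.2.1 + y.2.2 * y.2.2) * (1/2)
      + y.2.1 * y.1.2 - y.2.2 * y.1.1) _ x from hb).fderiv]
  simp [p1c, p2c, q1c, q2c]
  ring

lemma diffAt_H0 (x : Phase) : DifferentiableAt ℝ H0 x :=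
  (contDiff_H0.differentiable (by simp)).differentiableAt

lemma clm_decomp (x : Phase) (L : Phase →L[ℝ] ℝ) :
    L ((0,0), x.2) = x.2.1 * L ((0,0),(1,0)) + x.2.2 * L ((0,0),(0,1)) := by
  have hv : (((0,0), x.2) : Phase) = x.2.1 • (((0,0),(1,0)) : Phase)
      + x.2.2 • (((0,0),(0,1)) : Phase) := by
    simp [Prod.ext_iff]
  rw [hv, map_add, L.map_smul, L.map_smul, smul_eq_mul, smul_eq_mul]

lemma key_pointwise (h : Phase → ℝ) (hd : Differentiable ℝ h) (x : Phase) :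
    inner2 x.2 (XH (fun y => H0 y - h y) x).1 - (H0 x - h x)
      = sq2 x.2 / 2 + (h x - fderiv ℝ h x ((0,0), x.2)) := by
  have hfd : fderiv ℝ (fun y => H0 y - h y) x = fderiv ℝ H0 x - fderiv ℝ h x :=
    fderiv_sub (diffAt_H0 x) (hd x)
  have e1 : inner2 x.2 (XH (fun y => H0 y - h y) x).1
      = fderiv ℝ (fun y => H0 y - h y) x ((0,0), x.2) := by
    rw [clm_decomp x]
    simp [XH, inner2]
  rw [e1, hfd]
  simp only [ContinuousLinearMap.sub_apply]
  rw [fderiv_H0_apply]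
  unfold sq2 H0
  ring

lemma ray_const (h : Phase → ℝ) (hd : Differentiable ℝ h) (R : ℝ) (hR0 : 0 ≤ R)
    (hR : ∀ y : Phase, R < ‖y‖ → fderiv ℝ h y = 0)
    (x : Phase) (hx : R < ‖x‖) (lam : ℝ) (hlam : 1 ≤ lam) : h (lam • x) = h x := by
  have hder : ∀ s ∈ Icc (1:ℝ) lam, HasDerivAt (fun s : ℝ => h (s • x)) 0 s := by
    intro s hs
    have h1 : HasDerivAt (fun s : ℝ => s • x) ((1:ℝ) • x) s := (hasDerivAt_id s).smul_const x
    have h2 := (hd (s • x)).hasFDerivAt.comp_hasDerivAt s h1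
    have hz : fderiv ℝ h (s • x) = 0 := by
      apply hR
      rw [norm_smul]
      have hs1 : (1:ℝ) ≤ s := hs.1
      have habs : ‖s‖ = s := abs_of_pos (by linarith)
      rw [habs]
      nlinarith [norm_nonneg x]
    exact (by simpa [hz] using h2 : HasDerivAt (h ∘ fun s : ℝ => s • x) 0 s)
  have := constant_of_has_deriv_right_zero
    (f := fun s : ℝ => h (s • x)) (a := 1) (b := lam)
    (fun s hs => ((hder s hs).continuousAt).continuousWithinAt)
    (fun s hs => ((hder s (Ico_subset_Icc_self hs)).hasDerivWithinAt))
  simpa using this lam (right_mem_Icc.2 hlam)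

lemma exists_pos_lowerbound (h : Phase → ℝ) (hsm : ContDiff ℝ (⊤ : ℕ∞) h)
    (hsupp : HasCompactSupport fun x => fderiv ℝ h x)
    (hLiou : ∀ x : Phase, 0 < h x - fderiv ℝ h x ((0, 0), x.2)) :
    ∃ m : ℝ, 0 < m ∧ ∀ x : Phase, m ≤ h x - fderiv ℝ h x ((0, 0), x.2) := by
  have hd : Differentiable ℝ h := hsm.differentiable (by simp)
  set f : Phase → ℝ := fun x => h x - fderiv ℝ h x ((0,0), x.2) with hf
  have hcont : Continuous f := by
    apply (hsm.continuous).sub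
    exact (hsm.continuous_fderiv (by simp)).clm_apply
      (continuous_const.prodMk continuous_snd)
  obtain ⟨R0, hR0⟩ := hsupp.isCompact.isBounded.subset_closedBall 0
  set R : ℝ := max R0 1 with hRdef
  have hR1 : (1:ℝ) ≤ R := le_max_right _ _
  have hRpos : (0:ℝ) < R := lt_of_lt_of_le one_pos hR1
  have hzero : ∀ y : Phase, R < ‖y‖ → fderiv ℝ h y = 0 := by
    intro y hy
    apply image_eq_zero_of_notMem_tsupport
    intro hmem
    have := hR0 hmem
    simp only [Metric.mem_closedBall, dist_zero_right] at this
    have : ‖y‖ ≤ R := this.trans (le_max_left _ _)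
    linarith
  obtain ⟨x₀, hx₀mem, hmin⟩ := (isCompact_closedBall (0:Phase) (2*R)).exists_isMinOn
    ⟨0, by simp; positivity⟩ hcont.continuousOn
  refine ⟨f x₀, hLiou x₀, fun x => ?_⟩
  by_cases hx : ‖x‖ ≤ 2*R
  · show f x₀ ≤ f x
    exact hmin (by simpa [Metric.mem_closedBall, dist_zero_right] using hx)
  · push_neg at hx
    have hxn : (0:ℝ) < ‖x‖ := lt_trans (by positivity) hx
    set y : Phase := (2*R/‖x‖) • x with hy
    have hyn : ‖y‖ = 2*R := by
      rw [hy, norm_smul, Real.norm_eq_abs, abs_of_pos (by positivity)]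
      field_simp
    have hyR : R < ‖y‖ := by rw [hyn]; linarith
    have hxR : R < ‖x‖ := by linarith
    have hlam : (1:ℝ) ≤ ‖x‖/(2*R) := by
      rw [le_div_iff₀ (by positivity)]; linarith
    have hxy : (‖x‖/(2*R)) • y = x := by
      rw [hy, smul_smul]
      have : ‖x‖/(2*R) * (2*R/‖x‖) = 1 := by field_simp
      rw [this, one_smul]
    have hhxy : h x = h y := by
      rw [← hxy]
      exact ray_const h hd R hRpos.le hzero y hyR _ hlam
    have hfx : f x = h x := by
      simp only [hf]
      rw [hzero x hxR]
      simp
    have hfy : f y = h y := by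
      simp only [hf]
      rw [hzero y hyR]
      simp
    show f x₀ ≤ f x
    rw [hfx, hhxy, ← hfy]
    exact hmin (by simp [Metric.mem_closedBall, dist_zero_right, hyn])

lemma sq2_nonneg (a : R2) : 0 ≤ sq2 a := by unfold sq2; positivity

lemma sq2_sub_smul (a b : R2) (r : ℝ) : sq2 (a - r • b) ≤ 2 * sq2 a + 2 * r^2 * sq2 b := by
  simp only [sq2, Prod.fst_sub, Prod.snd_sub, Prod.smul_fst, Prod.smul_snd, smul_eq_mul]
  nlinarith [sq_nonneg (a.1 + r * b.1), sq_nonneg (a.2 + r * b.2)]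

lemma sq2_le_norm (z : Phase) : sq2 z.1 + sq2 z.2 ≤ 4 * ‖z‖^2 := by
  have h11 : ‖z.1.1‖ ≤ ‖z‖ := (norm_fst_le z.1).trans (norm_fst_le z)
  have h12 : ‖z.1.2‖ ≤ ‖z‖ := (norm_snd_le z.1).trans (norm_fst_le z)
  have h21 : ‖z.2.1‖ ≤ ‖z‖ := (norm_fst_le z.2).trans (norm_snd_le z)
  have h22 : ‖z.2.2‖ ≤ ‖z‖ := (norm_snd_le z.2).trans (norm_snd_le z)
  simp only [Real.norm_eq_abs] at h11 h12 h21 h22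
  simp only [sq2]
  nlinarith [abs_nonneg z.1.1, abs_nonneg z.1.2, abs_nonneg z.2.1, abs_nonneg z.2.2,
    sq_abs z.1.1, sq_abs z.1.2, sq_abs z.2.1, sq_abs z.2.2, norm_nonneg z]

lemma pt_ineq (e c Hv : ℝ) (a x1 u w : R2)
    (hK : sq2 a / 2 + c ≤ inner2 a x1 - Hv) :
    2 * e^2 * c ≤ 2 * e * (e * (inner2 a x1 - Hv) + inner2 a u) + (sq2 u + sq2 w) := by
  simp only [sq2, inner2] at hK ⊢
  have hn1 : 0 ≤ e ^ 2 * ((a.1 * x1.1 + a.2 * x1.2 - Hv) - ((a.1^2 + a.2^2)/2 + c)) :=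
    mul_nonneg (sq_nonneg e) (by linarith)
  nlinarith [hn1, sq_nonneg (e * a.1 + u.1), sq_nonneg (e * a.2 + u.2),
    sq_nonneg w.1, sq_nonneg w.2]

lemma abs_inner2_le (a b : R2) : |inner2 a b| ≤ (sq2 a + sq2 b) / 2 := by
  simp only [inner2, sq2]
  rw [abs_le]
  constructor <;> nlinarith [sq_nonneg (a.1 + b.1), sq_nonneg (a.2 + b.2),
    sq_nonneg (a.1 - b.1), sq_nonneg (a.2 - b.2)]

set_option maxHeartbeats 2000000 in
lemma main_est (h : Phase → ℝ) (hsm : ContDiff ℝ (⊤ : ℕ∞) h) (c : ℝ)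
    (hcle : ∀ x : Phase, c ≤ h x - fderiv ℝ h x ((0, 0), x.2))
    (q0 q1 : R2) (v v' : ℝ → Phase) (η : ℝ) (hη : η ≠ 0)
    (hpath : IsPath q0 q1 v v')
    (hgrad : Real.sqrt (gradSq (fun x => H0 x - h x) v v' η) < 1) :
    c * |η| ^ 2 ≤ |action (fun x => H0 x - h x) v v' η| * |η| + 1 / 2 := by
  have hd : Differentiable ℝ h := hsm.differentiable (by simp)
  set H : Phase → ℝ := fun x => H0 x - h x with hH
  have hHsm : ContDiff ℝ (⊤ : ℕ∞) H := contDiff_H0.sub hsm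
  set X : ℝ → Phase := fun t => XH H (v t) with hX
  set W : ℝ → ℝ := fun t => sq2 ((v' t).1 - η • (X t).1) + sq2 ((v' t).2 - η • (X t).2) with hW
  set I : ℝ → ℝ := fun t => inner2 (v t).2 (v' t).1 - η * H (v t) with hI
  set S : ℝ → ℝ := fun t => sq2 (v' t).1 + sq2 (v' t).2 with hS
  obtain ⟨-, -, hder, hSint'⟩ := hpath
  -- basic continuity
  have hvc : ContinuousOn v (Icc 0 1) := fun t ht => (hder t ht).continuousWithinAt
  have hfdc : Continuous fun x => fderiv ℝ H x := hHsm.continuous_fderiv (by simp)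
  have hXHc : Continuous (XH H) := by
    unfold XH
    exact ((hfdc.clm_apply continuous_const).prodMk (hfdc.clm_apply continuous_const)).prodMk
      (((hfdc.clm_apply continuous_const).neg).prodMk ((hfdc.clm_apply continuous_const).neg))
  have hXc : ContinuousOn X (Icc 0 1) := hXHc.comp_continuousOn hvc
  have hHc : ContinuousOn (fun t => H (v t)) (Icc 0 1) :=
    (hHsm.continuous.comp_continuousOn hvc)
  -- integrability of S
  have hSint : IntegrableOn S (Ioc 0 1) volume :=
    (intervalIntegrable_iff_integrableOn_Ioc_of_le zero_le_one).1 hSint'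
  -- measurability of v'
  have hrestr : volume.restrict (Ioc (0:ℝ) 1) = volume.restrict (Ioo (0:ℝ) 1) :=
    (Measure.restrict_congr_set Ioo_ae_eq_Ioc).symm
  have hv'ae : ∀ᵐ t ∂(volume.restrict (Ioc (0:ℝ) 1)), v' t = deriv v t := by
    rw [hrestr]
    filter_upwards [ae_restrict_mem measurableSet_Ioo] with t ht
    have : HasDerivAt v (v' t) t :=
      (hder t (Ioo_subset_Icc_self ht)).hasDerivAt (Icc_mem_nhds ht.1 ht.2)
    exact this.deriv.symm
  have hv'm : AEStronglyMeasurable v' (volume.restrict (Ioc (0:ℝ) 1)) :=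
    ((measurable_deriv v).stronglyMeasurable.aestronglyMeasurable).congr
      (by filter_upwards [hv'ae] with t ht using ht.symm)
  have hvm : AEStronglyMeasurable v (volume.restrict (Ioc (0:ℝ) 1)) :=
    (hvc.mono Ioc_subset_Icc_self).aestronglyMeasurable measurableSet_Ioc
  have hXm : AEStronglyMeasurable X (volume.restrict (Ioc (0:ℝ) 1)) :=
    (hXc.mono Ioc_subset_Icc_self).aestronglyMeasurable measurableSet_Ioc
  -- bounds on Icc
  obtain ⟨M1, hM1⟩ := (isCompact_Icc (a := (0:ℝ)) (b := 1)).exists_bound_of_continuousOn hvc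
  obtain ⟨M2, hM2⟩ := (isCompact_Icc (a := (0:ℝ)) (b := 1)).exists_bound_of_continuousOn hXc
  obtain ⟨M3, hM3⟩ := (isCompact_Icc (a := (0:ℝ)) (b := 1)).exists_bound_of_continuousOn hHc
  have hM2' : 0 ≤ M2 := (norm_nonneg _).trans (hM2 0 (by norm_num))
  have hM1' : 0 ≤ M1 := (norm_nonneg _).trans (hM1 0 (by norm_num))
  -- integrability of W
  have hGc : Continuous (fun z : Phase × Phase =>
      sq2 (z.1.1 - η • z.2.1) + sq2 (z.1.2 - η • z.2.2)) := by
    unfold sq2; fun_prop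
  have hWm : AEStronglyMeasurable W (volume.restrict (Ioc (0:ℝ) 1)) := by
    exact hGc.comp_aestronglyMeasurable (hv'm.prodMk hXm)
  have hfin : volume (Ioc (0:ℝ) 1) < ⊤ := by simp [Real.volume_Ioc]
  have hWint : IntegrableOn W (Ioc 0 1) volume := by
    apply Integrable.mono' ((hSint.const_mul 2).add
      (integrableOn_const (C := 2 * η^2 * (4 * M2^2)) hfin.ne)) hWm
    rw [ae_restrict_iff' measurableSet_Ioc]
    apply ae_of_all
    intro t ht
    have ht' : t ∈ Icc (0:ℝ) 1 := Ioc_subset_Icc_self ht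
    have hXb : sq2 (X t).1 + sq2 (X t).2 ≤ 4 * M2 ^ 2 := by
      have := sq2_le_norm (X t)
      have h2 := hM2 t ht'
      nlinarith [norm_nonneg (X t)]
    have e1 := sq2_sub_smul (v' t).1 (X t).1 η
    have e2 := sq2_sub_smul (v' t).2 (X t).2 η
    have hWnn : 0 ≤ W t := add_nonneg (sq2_nonneg _) (sq2_nonneg _)
    rw [Real.norm_eq_abs, abs_of_nonneg hWnn]
    have hXb1 : 2 * η^2 * sq2 (X t).1 + 2 * η^2 * sq2 (X t).2 ≤ 2 * η^2 * (4 * M2^2) := by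
      nlinarith [sq_nonneg η, sq2_nonneg (X t).1, sq2_nonneg (X t).2]
    show W t ≤ 2 * S t + 2 * η^2 * (4 * M2^2)
    have hWeq : W t = sq2 ((v' t).1 - η • (X t).1) + sq2 ((v' t).2 - η • (X t).2) := rfl
    have hSeq : S t = sq2 (v' t).1 + sq2 (v' t).2 := rfl
    rw [hWeq, hSeq]
    linarith [e1, e2]
  -- integrability of the action integrand
  have hI1m : AEStronglyMeasurable (fun t => inner2 (v t).2 (v' t).1)
      (volume.restrict (Ioc (0:ℝ) 1)) := by
    have hGc2 : Continuous (fun z : Phase × Phase => inner2 z.1.2 z.2.1) := by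
      unfold inner2; fun_prop
    exact hGc2.comp_aestronglyMeasurable (hvm.prodMk hv'm)
  have hI1int : IntegrableOn (fun t => inner2 (v t).2 (v' t).1) (Ioc 0 1) volume := by
    have hg : IntegrableOn (fun t => (4 * M1^2 + S t) / 2) (Ioc 0 1) volume :=
      ((integrableOn_const (C := 4 * M1^2) hfin.ne).add hSint).div_const 2
    apply Integrable.mono' hg hI1m
    rw [ae_restrict_iff' measurableSet_Ioc]
    apply ae_of_all
    intro t ht
    have ht' : t ∈ Icc (0:ℝ) 1 := Ioc_subset_Icc_self ht
    have h1 := abs_inner2_le (v t).2 (v' t).1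
    have h2 : sq2 (v t).2 ≤ 4 * M1^2 := by
      have := sq2_le_norm (v t)
      have := hM1 t ht'
      nlinarith [norm_nonneg (v t), sq2_nonneg (v t).1]
    have h3 : sq2 (v' t).1 ≤ S t := by
      simp only [hS]; nlinarith [sq2_nonneg (v' t).2]
    rw [Real.norm_eq_abs]
    show |inner2 (v t).2 (v' t).1| ≤ (4 * M1^2 + S t) / 2
    have hSeq : S t = sq2 (v' t).1 + sq2 (v' t).2 := rfl
    rw [hSeq]
    have h4 := sq2_nonneg (v' t).2
    linarith
  have hHvint : IntegrableOn (fun t => H (v t)) (Ioc 0 1) volume := by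
    have hg : IntegrableOn (fun _ : ℝ => M3) (Ioc 0 1) volume :=
      integrableOn_const (C := M3) hfin.ne
    apply Integrable.mono' hg
      ((hHc.mono Ioc_subset_Icc_self).aestronglyMeasurable measurableSet_Ioc)
    rw [ae_restrict_iff' measurableSet_Ioc]
    exact ae_of_all _ fun t ht => hM3 t (Ioc_subset_Icc_self ht)
  have hIint : IntegrableOn I (Ioc 0 1) volume := hI1int.sub (hHvint.const_mul η)
  -- action as a set integral
  have hact : action H v v' η = ∫ t in Ioc (0:ℝ) 1, I t := by
    unfold action
    rw [intervalIntegral.integral_of_le zero_le_one, intervalIntegral.integral_of_le zero_le_one,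
      ← integral_const_mul, ← integral_sub hI1int (hHvint.const_mul η)]
  -- the gradient bound
  have hgs : gradSq H v v' η < 1 := by
    by_contra hcon
    push_neg at hcon
    have := Real.sqrt_le_sqrt hcon
    rw [Real.sqrt_one] at this
    linarith
  have hWle : ∫ t in Ioc (0:ℝ) 1, W t ≤ 1 := by
    have h2 : gradSq H v v' η
        = (∫ t in Ioc (0:ℝ) 1, W t) + (∫ t in (0:ℝ)..1, H (v t)) ^ 2 := by
      unfold gradSq
      rw [intervalIntegral.integral_of_le zero_le_one]
    nlinarith [sq_nonneg (∫ t in (0:ℝ)..1, H (v t))]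
  -- pointwise estimate
  have hεpos : (0:ℝ) < |η| := abs_pos.2 hη
  have hpt : ∀ t ∈ Icc (0:ℝ) 1, 2 * η^2 * c ≤ 2 * η * I t + W t := by
    intro t ht
    have hkey := key_pointwise h hd (v t)
    have hc' := hcle (v t)
    have hK : sq2 (v t).2 / 2 + c ≤ inner2 (v t).2 (X t).1 - H (v t) := by
      have hXe : (X t).1 = (XH (fun y => H0 y - h y) (v t)).1 := rfl
      have hHe : H (v t) = H0 (v t) - h (v t) := rfl
      rw [hXe, hHe]
      linarith
    have hids : I t = η * (inner2 (v t).2 (X t).1 - H (v t))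
        + inner2 (v t).2 ((v' t).1 - η • (X t).1) := by
      simp only [hI, inner2, Prod.fst_sub, Prod.snd_sub, Prod.smul_fst, Prod.smul_snd,
        smul_eq_mul]
      ring
    have hWt : W t = sq2 ((v' t).1 - η • (X t).1) + sq2 ((v' t).2 - η • (X t).2) := rfl
    rw [hWt, hids]
    exact pt_ineq η c (H (v t)) (v t).2 (X t).1 _ _ hK
  -- integrate the pointwise estimate
  have hgint : IntegrableOn (fun t => 2 * η * I t + W t) (Ioc 0 1) volume :=
    (hIint.const_mul _).add hWint
  have hconstint : IntegrableOn (fun _ : ℝ => 2 * η^2 * c) (Ioc 0 1) volume :=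
    integrableOn_const hfin.ne
  have hmono := integral_mono_ae hconstint hgint (by
    rw [Filter.EventuallyLE, ae_restrict_iff' measurableSet_Ioc]
    exact ae_of_all _ fun t ht => hpt t (Ioc_subset_Icc_self ht))
  rw [setIntegral_const, integral_add (hIint.const_mul _) hWint, integral_const_mul,
    ← hact] at hmono
  simp only [measureReal_def, Real.volume_Ioc, sub_zero, ENNReal.toReal_ofReal zero_le_one, one_smul] at hmono
  -- conclude
  have hsA : 2 * η * action H v v' η ≤ 2 * (|η| * |action H v v' η|) := by
    have : η * action H v v' η ≤ |η * action H v v' η| := le_abs_self _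
    rw [abs_mul] at this
    linarith
  have hsq : |η|^2 = η^2 := sq_abs η
  rw [hsq]
  nlinarith [hmono, hWle, hsA]


end

/-- For `h ∈ 𝓗` and `c := inf (h − dh(p∂ₚ))`, which is positive: if the Rabinowitz action
functional of `H₀ − h` has gradient norm `< 1` at `(v,η)`, then
`|η| ≤ |𝒜(v,η)|/c + 1/√(2c)`. -/
theorem stmt2 (h : Phase → ℝ) (hsm : ContDiff ℝ (⊤ : ℕ∞) h)
    (hsupp : HasCompactSupport fun x => fderiv ℝ h x)
    (hpos : ∀ x, 0 < h x)
    (hLiou : ∀ x : Phase, 0 < h x - fderiv ℝ h x ((0, 0), x.2))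
    (c : ℝ) (hc : c = sInf (Set.range fun x : Phase => h x - fderiv ℝ h x ((0, 0), x.2)))
    (q0 q1 : R2) (v v' : ℝ → Phase) (η : ℝ)
    (hpath : IsPath q0 q1 v v')
    (hgrad : Real.sqrt (gradSq (fun x => H0 x - h x) v v' η) < 1) :
    0 < c ∧
      |η| ≤ |action (fun x => H0 x - h x) v v' η| / c + 1 / Real.sqrt (2 * c) := by
  obtain ⟨m, hm, hmle⟩ := exists_pos_lowerbound h hsm hsupp hLiou
  have hbdd : BddBelow (Set.range fun x : Phase => h x - fderiv ℝ h x ((0, 0), x.2)) := by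
    refine ⟨m, ?_⟩
    rintro y ⟨x, rfl⟩
    exact hmle x
  have hmc : m ≤ c := by
    rw [hc]
    exact le_csInf ⟨_, Set.mem_range_self 0⟩ (by rintro y ⟨x, rfl⟩; exact hmle x)
  have hcpos : 0 < c := lt_of_lt_of_le hm hmc
  have hcle : ∀ x : Phase, c ≤ h x - fderiv ℝ h x ((0, 0), x.2) := by
    intro x
    rw [hc]
    exact csInf_le hbdd (Set.mem_range_self x)
  refine ⟨hcpos, ?_⟩
  set A : ℝ := |action (fun x => H0 x - h x) v v' η| with hA
  have hA0 : 0 ≤ A := abs_nonneg _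
  set s : ℝ := Real.sqrt (2 * c) with hs
  have hspos : 0 < s := Real.sqrt_pos.2 (by linarith)
  have hss : s * s = 2 * c := Real.mul_self_sqrt (by linarith)
  by_cases hη : η = 0
  · rw [hη]
    simp only [abs_zero]
    positivity
  · have key : c * |η| ^ 2 ≤ A * |η| + 1 / 2 :=
      main_est h hsm c hcle q0 q1 v v' η hη hpath hgrad
    set y : ℝ := |η| with hy
    have hy0 : 0 < y := abs_pos.2 hη
    by_contra hcon
    push_neg at hcon
    have hcon' : A * s + c < y * (c * s) := by
      rw [div_add_div _ _ (ne_of_gt hcpos) (ne_of_gt hspos), div_lt_iff₀ (by positivity)] at hcon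
      nlinarith [hcon]
    have h1 : (A * s + c) * y < (y * (c * s)) * y := by
      exact mul_lt_mul_of_pos_right hcon' hy0
    have h3 : (c * y ^ 2) * s ≤ (A * y + 1 / 2) * s :=
      mul_le_mul_of_nonneg_right key hspos.le
    have h4 : 2 * c * y < s := by nlinarith [h1, h3]
    have h5 : (2 * c * y) * s < s * s := mul_lt_mul_of_pos_right h4 hspos
    have h6 : y * s < 1 := by nlinarith [h5, hss, hcpos]
    nlinarith [mul_nonneg hA0 hspos.le, mul_lt_mul_of_pos_left h6 hcpos, hcon', hy0, hcpos]
end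

section
/- Fix c > 0. The set of pairs (q₀,q₁) ∈ ℝ²×ℝ² such that q₀ ≠ q₁ and every η ∈ ℝ with f_{c,q₀,q₁}(η) = 0 satisfies f'_{c,q₀,q₁}(η) ≠ 0 is residual (comeagre) in ℝ²×ℝ² ≅ ℝ⁴. -/
open Set

noncomputable section

/-- `v` is a chord of `H` at energy `e` from `q0` to `q1` with parameter `η`. -/
def IsChord (H : Phase → ℝ) (e : ℝ) (q0 q1 : R2) (η : ℝ) (v : ℝ → Phase) : Prop :=
  (v 0).1 = q0 ∧ (v 1).1 = q1 ∧
  (∀ t ∈ Icc (0:ℝ) 1, HasDerivWithinAt v (η • XH H (v t)) (Icc (0:ℝ) 1) t) ∧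
  ∀ t ∈ Icc (0:ℝ) 1, H (v t) = e

/-- The rotation matrix `R(t) = [[cos t, sin t], [−sin t, cos t]]` acting on `ℝ²`. -/
def rot (t : ℝ) (a : R2) : R2 :=
  (Real.cos t * a.1 + Real.sin t * a.2, -Real.sin t * a.1 + Real.cos t * a.2)

/-- `f_{c,q₀,q₁}(η) = −cη² + η⟨q₁, R(η+π/2)q₀⟩ + (|q₀|²+|q₁|²)/2 − ⟨q₁, R(η)q₀⟩`. -/
def ff (c : ℝ) (q0 q1 : R2) (η : ℝ) : ℝ :=
  -c * η ^ 2 + η * inner2 q1 (rot (η + Real.pi / 2) q0) +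
    (sq2 q0 + sq2 q1) / 2 - inner2 q1 (rot η q0)

end

noncomputable section Aux

/-- `A = ⟨q₁, q₀⟩`. -/
def gA (q0 q1 : R2) : ℝ := q1.1 * q0.1 + q1.2 * q0.2

/-- `B = q₁₁q₀₂ − q₁₂q₀₁`. -/
def gB (q0 q1 : R2) : ℝ := q1.1 * q0.2 - q1.2 * q0.1

/-- `g(η) = f(η) + cη²` (independent of `c`). -/
def gg (q0 q1 : R2) (η : ℝ) : ℝ :=
  η * (-(gA q0 q1) * Real.sin η + gB q0 q1 * Real.cos η) + (sq2 q0 + sq2 q1) / 2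
    - (gA q0 q1 * Real.cos η + gB q0 q1 * Real.sin η)

/-- The derivative of `gg`. -/
def dg (q0 q1 : R2) (η : ℝ) : ℝ :=
  -(η * (gA q0 q1 * Real.cos η + gB q0 q1 * Real.sin η))

/-- Scaling of a point of `ℝ²`. -/
def sm (l : ℝ) (a : R2) : R2 := (l * a.1, l * a.2)

lemma ff_eq (c : ℝ) (q0 q1 : R2) (η : ℝ) : ff c q0 q1 η = -c * η ^ 2 + gg q0 q1 η := by
  unfold ff gg rot inner2 sq2 gA gB
  rw [Real.cos_add_pi_div_two, Real.sin_add_pi_div_two]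
  ring

lemma hasDerivAt_gg (q0 q1 : R2) (η : ℝ) : HasDerivAt (gg q0 q1) (dg q0 q1 η) η := by
  have h1 := Real.hasDerivAt_sin η
  have h2 := Real.hasDerivAt_cos η
  have h3 : HasDerivAt (fun η : ℝ => η * (-(gA q0 q1) * Real.sin η + gB q0 q1 * Real.cos η))
      (1 * (-(gA q0 q1) * Real.sin η + gB q0 q1 * Real.cos η) +
        η * (-(gA q0 q1) * Real.cos η + gB q0 q1 * -Real.sin η)) η :=
    (hasDerivAt_id η).mul ((h1.const_mul (-(gA q0 q1))).add (h2.const_mul (gB q0 q1)))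
  have h4 : HasDerivAt (fun η : ℝ => gA q0 q1 * Real.cos η + gB q0 q1 * Real.sin η)
      (gA q0 q1 * -Real.sin η + gB q0 q1 * Real.cos η) η :=
    (h2.const_mul (gA q0 q1)).add (h1.const_mul (gB q0 q1))
  have h5 := (h3.add_const ((sq2 q0 + sq2 q1) / 2)).sub h4
  refine HasDerivAt.congr_deriv h5 ?_
  unfold dg; ring

lemma hasDerivAt_ff (c : ℝ) (q0 q1 : R2) (η : ℝ) :
    HasDerivAt (ff c q0 q1) (-(2 * c * η) + dg q0 q1 η) η := by
  have h1 : HasDerivAt (fun η : ℝ => -c * η ^ 2) (-c * ((2 : ℕ) * η ^ 1)) η :=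
    (hasDerivAt_pow 2 η).const_mul (-c)
  have h2 := h1.add (hasDerivAt_gg q0 q1 η)
  have he : (fun η => ff c q0 q1 η) = fun η => -c * η ^ 2 + gg q0 q1 η := by
    funext η; exact ff_eq c q0 q1 η
  rw [show (ff c q0 q1) = fun η => ff c q0 q1 η from rfl, he]
  refine HasDerivAt.congr_deriv h2 ?_
  push_cast; ring

lemma deriv_ff (c : ℝ) (q0 q1 : R2) (η : ℝ) :
    deriv (ff c q0 q1) η = -(2 * c * η) + dg q0 q1 η :=
  (hasDerivAt_ff c q0 q1 η).deriv

lemma gA_sm (l : ℝ) (q0 q1 : R2) : gA (sm l q0) (sm l q1) = l ^ 2 * gA q0 q1 := by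
  unfold gA sm; ring

lemma gB_sm (l : ℝ) (q0 q1 : R2) : gB (sm l q0) (sm l q1) = l ^ 2 * gB q0 q1 := by
  unfold gB sm; ring

lemma sq2_sm (l : ℝ) (a : R2) : sq2 (sm l a) = l ^ 2 * sq2 a := by
  unfold sq2 sm; ring

lemma gg_sm (l : ℝ) (q0 q1 : R2) (η : ℝ) :
    gg (sm l q0) (sm l q1) η = l ^ 2 * gg q0 q1 η := by
  unfold gg; rw [gA_sm, gB_sm, sq2_sm, sq2_sm]; ring

lemma dg_sm (l : ℝ) (q0 q1 : R2) (η : ℝ) :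
    dg (sm l q0) (sm l q1) η = l ^ 2 * dg q0 q1 η := by
  unfold dg; rw [gA_sm, gB_sm]; ring

lemma ff_sm (c l : ℝ) (q0 q1 : R2) (η : ℝ) :
    ff c (sm l q0) (sm l q1) η = -c * η ^ 2 + l ^ 2 * gg q0 q1 η := by
  rw [ff_eq, gg_sm]

lemma gg_zero_pos (q0 q1 : R2) (hne : q0 ≠ q1) : 0 < gg q0 q1 0 := by
  have h : gg q0 q1 0 = ((q0.1 - q1.1) ^ 2 + (q0.2 - q1.2) ^ 2) / 2 := by
    unfold gg gA gB sq2; simp [Real.cos_zero, Real.sin_zero]; ring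
  rw [h]
  have : q0.1 ≠ q1.1 ∨ q0.2 ≠ q1.2 := by
    by_contra hcon
    push_neg at hcon
    exact hne (Prod.ext hcon.1 hcon.2)
  rcases this with h1 | h1
  · have := sq_pos_of_ne_zero (sub_ne_zero.mpr h1)
    nlinarith [sq_nonneg (q0.2 - q1.2)]
  · have := sq_pos_of_ne_zero (sub_ne_zero.mpr h1)
    nlinarith [sq_nonneg (q0.1 - q1.1)]

/-- Key lemma: for `q0 ≠ q1` we may rescale both points by `l` arbitrarily close to `1`
so that every zero of `f` for the rescaled pair is regular. -/
lemma good_scale (c : ℝ) (hc : 0 < c) (q0 q1 : R2) (hne : q0 ≠ q1) {δ : ℝ} (hδ : 0 < δ) :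
    ∃ l : ℝ, 0 < l ∧ |l - 1| < δ ∧
      ∀ η : ℝ, ¬(ff c (sm l q0) (sm l q1) η = 0 ∧
        -(2 * c * η) + dg (sm l q0) (sm l q1) η = 0) := by
  classical
  set Z : Set ℝ := {η : ℝ | η ≠ 0 ∧ 0 < gg q0 q1 η ∧ η * dg q0 q1 η = 2 * gg q0 q1 η} with hZdef
  set ψ : ℝ → ℝ := fun η => Real.sqrt (c * η ^ 2 / gg q0 q1 η) with hψdef
  -- ψ has derivative 0 on Z
  have hψderiv : ∀ η ∈ Z, HasDerivAt ψ 0 η := by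
    intro η hη
    obtain ⟨hη0, hgpos, hrel⟩ := hη
    have hη2 : 0 < η ^ 2 := by positivity
    have hnum : HasDerivAt (fun η : ℝ => c * η ^ 2) (c * ((2 : ℕ) * η ^ 1)) η :=
      (hasDerivAt_pow 2 η).const_mul c
    have hφ : HasDerivAt (fun η => c * η ^ 2 / gg q0 q1 η)
        ((c * ((2 : ℕ) * η ^ 1) * gg q0 q1 η - c * η ^ 2 * dg q0 q1 η) / (gg q0 q1 η) ^ 2) η :=
      hnum.div (hasDerivAt_gg q0 q1 η) (ne_of_gt hgpos)
    have hD : (c * ((2 : ℕ) * η ^ 1) * gg q0 q1 η - c * η ^ 2 * dg q0 q1 η) / (gg q0 q1 η) ^ 2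
        = 0 := by
      have hnum0 : c * ((2 : ℕ) * η ^ 1) * gg q0 q1 η - c * η ^ 2 * dg q0 q1 η = 0 := by
        push_cast
        linear_combination (-c * η) * hrel
      rw [hnum0, zero_div]
    rw [hD] at hφ
    have hφpos : 0 < c * η ^ 2 / gg q0 q1 η := div_pos (by positivity) hgpos
    have := hφ.sqrt (ne_of_gt hφpos)
    simpa using this
  -- image of Z under ψ is null
  have hnull : MeasureTheory.volume (ψ '' Z) = 0 := by
    apply MeasureTheory.addHaar_image_eq_zero_of_det_fderivWithin_eq_zero
      MeasureTheory.volume (f' := fun _ => (0 : ℝ →L[ℝ] ℝ))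
    · intro η hη
      have h := (hψderiv η hη).hasFDerivAt.hasFDerivWithinAt (s := Z)
      refine h.congr_fderiv ?_
      refine ContinuousLinearMap.ext fun t => ?_
      simp
    · intro η _
      simp [ContinuousLinearMap.det]
  -- pick l close to 1 avoiding ψ '' Z
  set a : ℝ := max (1 - δ) (1 / 2) with ha
  have ha1 : a < 1 := by
    apply max_lt <;> linarith
  have hsub : ¬ (Ioo a 1 ⊆ ψ '' Z) := by
    intro hsub
    have := MeasureTheory.measure_mono (μ := MeasureTheory.volume) hsub
    rw [hnull, Real.volume_Ioo] at this
    simp only [nonpos_iff_eq_zero, ENNReal.ofReal_eq_zero] at this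
    linarith
  obtain ⟨l, hlI, hlZ⟩ := not_subset.mp hsub
  have hl0 : 0 < l := lt_trans (lt_of_lt_of_le (by norm_num) (le_max_right _ _)) hlI.1
  refine ⟨l, hl0, ?_, ?_⟩
  · rw [abs_lt]
    constructor
    · have := lt_of_le_of_lt (le_max_left (1 - δ) (1 / 2)) hlI.1
      linarith
    · linarith [hlI.2]
  · rintro η ⟨h1, h2⟩
    rw [ff_sm] at h1
    rw [dg_sm] at h2
    by_cases hη : η = 0
    · subst hη
      have hg0 := gg_zero_pos q0 q1 hne
      norm_num at h1
      rcases h1 with h | h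
      · exact absurd h (ne_of_gt hl0)
      · linarith
    · have hη2 : 0 < η ^ 2 := by positivity
      have hl2 : 0 < l ^ 2 := by positivity
      have heq1 : l ^ 2 * gg q0 q1 η = c * η ^ 2 := by linarith
      have hgpos : 0 < gg q0 q1 η := by nlinarith
      have hrel : η * dg q0 q1 η = 2 * gg q0 q1 η := by
        have h2' : l ^ 2 * dg q0 q1 η = 2 * c * η := by linarith
        have : l ^ 2 * (η * dg q0 q1 η) = l ^ 2 * (2 * gg q0 q1 η) := by
          linear_combination η * h2' - 2 * heq1
        exact mul_left_cancel₀ (ne_of_gt hl2) this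
      have hψη : ψ η = l := by
        have : c * η ^ 2 / gg q0 q1 η = l ^ 2 := by
          field_simp
          linarith
        rw [hψdef]
        simp only [this]
        exact Real.sqrt_sq hl0.le
      exact hlZ ⟨η, ⟨hη, hgpos, hrel⟩, hψη⟩

/-- The continuous "derivative" function in all variables. -/
def dff (c : ℝ) (x : Phase) (η : ℝ) : ℝ := -(2 * c * η) + dg x.1 x.2 η

lemma continuous_ff (c : ℝ) : Continuous (fun p : Phase × ℝ => ff c p.1.1 p.1.2 p.2) := by
  unfold ff rot inner2 sq2
  fun_prop

lemma continuous_dff (c : ℝ) : Continuous (fun p : Phase × ℝ => dff c p.1 p.2) := by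
  unfold dff dg gA gB
  fun_prop

/-- The basic open-dense sets. -/
def US (c : ℝ) (n : ℕ) : Set Phase :=
  {x : Phase | x.1 ≠ x.2 ∧ ∀ η ∈ Icc (-(n : ℝ)) n,
    ¬(ff c x.1 x.2 η = 0 ∧ dff c x η = 0)}

lemma isOpen_US (c : ℝ) (n : ℕ) : IsOpen (US c n) := by
  have hW : IsOpen {p : Phase × ℝ | ¬(ff c p.1.1 p.1.2 p.2 = 0 ∧ dff c p.1 p.2 = 0)} := by
    have h1 : IsClosed {p : Phase × ℝ | ff c p.1.1 p.1.2 p.2 = 0} :=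
      isClosed_eq (continuous_ff c) continuous_const
    have h2 : IsClosed {p : Phase × ℝ | dff c p.1 p.2 = 0} :=
      isClosed_eq (continuous_dff c) continuous_const
    have h4 : {p : Phase × ℝ | ¬(ff c p.1.1 p.1.2 p.2 = 0 ∧ dff c p.1 p.2 = 0)} =
        ({p : Phase × ℝ | ff c p.1.1 p.1.2 p.2 = 0} ∩ {p | dff c p.1 p.2 = 0})ᶜ := rfl
    rw [h4]
    exact (h1.inter h2).isOpen_compl
  have hO1 : IsOpen {x : Phase | x.1 ≠ x.2} :=
    isOpen_ne_fun continuous_fst continuous_snd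
  have hO2 : IsOpen {x : Phase | ∀ η ∈ Icc (-(n : ℝ)) n,
      ¬(ff c x.1 x.2 η = 0 ∧ dff c x η = 0)} := by
    rw [isOpen_iff_mem_nhds]
    intro x hx
    have hsub : ({x} ×ˢ Icc (-(n : ℝ)) n : Set (Phase × ℝ)) ⊆
        {p : Phase × ℝ | ¬(ff c p.1.1 p.1.2 p.2 = 0 ∧ dff c p.1 p.2 = 0)} := by
      rintro ⟨y, η⟩ ⟨hy, hη⟩
      simp only [mem_singleton_iff] at hy
      subst hy
      exact hx η hη
    obtain ⟨u, v, hu, hv, hxu, hIv, huv⟩ :=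
      generalized_tube_lemma isCompact_singleton isCompact_Icc hW hsub
    refine Filter.mem_of_superset (hu.mem_nhds (hxu rfl)) ?_
    intro y hy η hη
    exact huv (mk_mem_prod hy (hIv hη))
  exact hO1.inter hO2

lemma dense_US (c : ℝ) (hc : 0 < c) (n : ℕ) : Dense (US c n) := by
  rw [dense_iff_inter_open]
  intro O hO hOne
  obtain ⟨x, hx⟩ := hOne
  obtain ⟨y, hyO, hyne⟩ : ∃ y : Phase, y ∈ O ∧ y.1 ≠ y.2 := by
    by_cases h : x.1 ≠ x.2
    · exact ⟨x, hx, h⟩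
    · push_neg at h
      obtain ⟨ε, hε, hball⟩ := Metric.isOpen_iff.mp hO x hx
      refine ⟨(x.1, (x.2.1 + ε / 2, x.2.2)), hball ?_, ?_⟩
      · rw [Metric.mem_ball]
        have h1 : dist (x.2.1 + ε / 2) x.2.1 = ε / 2 := by
          rw [Real.dist_eq, add_sub_cancel_left]
          exact abs_of_pos (by linarith)
        simp only [Prod.dist_eq, dist_self, h1, sup_lt_iff]
        and_intros <;> linarith
      · intro hEq
        rw [h] at hEq
        have h2 : x.2.1 = x.2.1 + ε / 2 := congrArg Prod.fst hEq
        linarith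
  obtain ⟨ε₂, hε₂, hball₂⟩ := Metric.isOpen_iff.mp hO y hyO
  have hcont : Continuous (fun l : ℝ => ((sm l y.1, sm l y.2) : Phase)) := by
    unfold sm; fun_prop
  have h1 : (fun l : ℝ => ((sm l y.1, sm l y.2) : Phase)) 1 = y := by
    simp [sm]
  have hpre : (fun l : ℝ => ((sm l y.1, sm l y.2) : Phase)) ⁻¹' O ∈ nhds 1 :=
    hcont.continuousAt.preimage_mem_nhds
      (by rw [show ((sm 1 y.1, sm 1 y.2) : Phase) = y by simp [sm]]; exact hO.mem_nhds hyO)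
  obtain ⟨δ, hδ, hδsub⟩ := Metric.mem_nhds_iff.mp hpre
  obtain ⟨l, hl0, hlδ, hgood⟩ := good_scale c hc y.1 y.2 hyne hδ
  refine ⟨(sm l y.1, sm l y.2), hδsub ?_, ?_, ?_⟩
  · rw [Metric.mem_ball, Real.dist_eq]
    exact hlδ
  · intro hEq
    apply hyne
    have e1 : l * y.1.1 = l * y.2.1 := congrArg Prod.fst hEq
    have e2 : l * y.1.2 = l * y.2.2 := congrArg Prod.snd hEq
    have hl : l ≠ 0 := ne_of_gt hl0
    exact Prod.ext (mul_left_cancel₀ hl e1) (mul_left_cancel₀ hl e2)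
  · exact fun η _ => hgood η

end Aux

/-- For fixed `c > 0`, the set of pairs `(q₀,q₁)` with `q₀ ≠ q₁` such that every zero of
`f_{c,q₀,q₁}` is a regular zero is residual in `ℝ² × ℝ²`. -/
theorem stmt11 (c : ℝ) (hc : 0 < c) :
    {x : R2 × R2 | x.1 ≠ x.2 ∧
        ∀ η : ℝ, ff c x.1 x.2 η = 0 → deriv (ff c x.1 x.2) η ≠ 0} ∈
      residual (R2 × R2) := by
  have hres : ∀ n : ℕ, US c n ∈ residual (R2 × R2) := fun n =>
    residual_of_dense_open (isOpen_US c n) (dense_US c hc n)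
  refine Filter.mem_of_superset (countable_iInter_mem.mpr hres) ?_
  intro x hx
  simp only [mem_iInter] at hx
  refine ⟨(hx 0).1, fun η hη hd => ?_⟩
  obtain ⟨n, hn⟩ := exists_nat_ge |η|
  have hmem : η ∈ Icc (-(n : ℝ)) n := by
    rw [mem_Icc]
    constructor
    · linarith [neg_abs_le η]
    · linarith [le_abs_self η]
  refine (hx n).2 η hmem ⟨hη, ?_⟩
  show -(2 * c * η) + dg x.1 x.2 η = 0
  rw [← deriv_ff c x.1 x.2 η]
  exact hd
end
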